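/- arXiv:1207.3231 — 4 statements merged into one kernel-verified Lean document; each statement's English description precedes it below -/
import Mathlib

section
/- Let A be a nonnegative adjacency matrix on n agents with Laplacian L. Then 0 is an algebraically simple eigenvalue of L if and only if the associated directed graph (with an edge from j to i whenever a_ij > 0) has a directed spanning tree. -/
open Matrix Finset

/-- The Laplacian of a nonnegative adjacency matrix `A`:
`ℓ_ii = ∑_{j≠i} a_ij` and `ℓ_ij = -a_ij` for `i ≠ j`. -/
def lap {n : ℕ} (A : Matrix (Fin n) (Fin n) ℝ) : Matrix (Fin n) (Fin n) ℝ :=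
  Matrix.of fun i j => if i = j then ∑ k ∈ Finset.univ.erase i, A i k else -A i j

/-!
The coefficient of `X` in the characteristic polynomial of `L` is, up to sign, the sum of the
principal minors `det L[s, s]` with `|s| = n - 1`, and the constant term vanishes because every row
of `L` sums to zero; so `0` is a simple root iff that sum is nonzero. Each such minor is weakly
diagonally dominant with nonnegative diagonal, hence has nonnegative determinant, so the sum is
nonzero iff one of the minors is nonsingular. Finally `L[s, s]` is nonsingular iff every vertex of
`s` is reachable from outside `s`: if so, a maximum-modulus argument along the directed paths
kills the kernel; if not, the rows of the unreachable vertices form a block with zero row sums.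
-/

namespace Polynomial

theorem natTrailingDegree_eq_one_iff {R : Type*} [Semiring R] {p : R[X]} (hp : p ≠ 0) :
    p.natTrailingDegree = 1 ↔ p.coeff 0 = 0 ∧ p.coeff 1 ≠ 0 := by
  refine ⟨fun h => ⟨(natTrailingDegree_ne_zero.mp (by omega)).2,
    h ▸ coeff_natTrailingDegree_ne_zero.mpr hp⟩, fun ⟨h0, h1⟩ => ?_⟩
  have := natTrailingDegree_ne_zero.mpr ⟨hp, h0⟩
  have := natTrailingDegree_le_of_ne_zero h1
  omega

end Polynomial

namespace Matrix

variable {ι : Type*} [Fintype ι] [DecidableEq ι]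

theorem det_nonneg_of_sum_row_le_diag (B : Matrix ι ι ℝ)
    (h : ∀ i, ∑ j ∈ univ.erase i, ‖B i j‖ ≤ B i i) : 0 ≤ B.det := by
  -- `s • B + (1 - s) • 1` is strictly diagonally dominant for `0 ≤ s < 1`, so its determinant
  -- cannot change sign there; it starts at `det 1 = 1` and tends to `det B` as `s → 1`.
  set φ : ℝ → ℝ := fun s => (s • B + (1 - s) • (1 : Matrix ι ι ℝ)).det
  have hφ : Continuous φ := by fun_prop
  have hne : ∀ s ∈ Set.Ico (0 : ℝ) 1, φ s ≠ 0 := by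
    intro s ⟨hs0, hs1⟩
    refine det_ne_zero_of_sum_row_lt_diag fun i => ?_
    have hoff : ∀ j ∈ univ.erase i,
        ‖(s • B + (1 - s) • (1 : Matrix ι ι ℝ)) i j‖ = s * ‖B i j‖ := by
      intro j hj
      simp [one_apply_ne' (ne_of_mem_erase hj), abs_of_nonneg hs0]
    rw [sum_congr rfl hoff, ← mul_sum]
    have hdiag : ‖(s • B + (1 - s) • (1 : Matrix ι ι ℝ)) i i‖ = |s * B i i + (1 - s)| := by
      simp
    rw [hdiag]
    calc s * ∑ j ∈ univ.erase i, ‖B i j‖ ≤ s * B i i := mul_le_mul_of_nonneg_left (h i) hs0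
      _ < s * B i i + (1 - s) := by linarith
      _ ≤ _ := le_abs_self _
  have hpos : ∀ s ∈ Set.Ico (0 : ℝ) 1, 0 < φ s := by
    intro s hs
    by_contra! hle
    obtain ⟨u, hu, hu0⟩ := intermediate_value_Icc' hs.1 hφ.continuousOn ⟨hle, by simp [φ]⟩
    exact hne u ⟨hu.1, hu.2.trans_lt hs.2⟩ hu0
  have hone : (1 : ℝ) ∈ closure (Set.Ico (0 : ℝ) 1) := by simp [closure_Ico zero_ne_one]
  simpa [φ] using (isClosed_le continuous_const hφ).closure_subset_iff.mpr
    (fun s hs => (hpos s hs).le) hone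

section NormedField

variable {K : Type*} [NormedField K] {B : Matrix ι ι K} {v : ι → K}

theorem norm_diag_mul_le_of_mulVec_eq_zero (hBv : B *ᵥ v = 0) (i : ι) :
    ‖B i i‖ * ‖v i‖ ≤ ∑ j ∈ univ.erase i, ‖B i j‖ * ‖v j‖ := by
  have hrow : B i i * v i = -∑ j ∈ univ.erase i, B i j * v j := by
    have := congrFun hBv i
    rw [mulVec, dotProduct, ← add_sum_erase _ _ (mem_univ i)] at this
    exact eq_neg_of_add_eq_zero_left this
  calc ‖B i i‖ * ‖v i‖ = ‖∑ j ∈ univ.erase i, B i j * v j‖ := by rw [← norm_mul, hrow, norm_neg]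
    _ ≤ ∑ j ∈ univ.erase i, ‖B i j‖ * ‖v j‖ := by
      simpa only [norm_mul] using norm_sum_le (univ.erase i) fun j => B i j * v j

section MaxModulus

variable {i : ι} (hBv : B *ᵥ v = 0) (hmax : ∀ j, ‖v j‖ ≤ ‖v i‖)
include hBv hmax

theorem norm_diag_le_sum_row_of_mulVec_eq_zero (hvi : v i ≠ 0) :
    ‖B i i‖ ≤ ∑ j ∈ univ.erase i, ‖B i j‖ := by
  refine le_of_mul_le_mul_right ?_ (norm_pos_iff.mpr hvi)
  calc ‖B i i‖ * ‖v i‖ ≤ ∑ j ∈ univ.erase i, ‖B i j‖ * ‖v j‖ :=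
        norm_diag_mul_le_of_mulVec_eq_zero hBv i
    _ ≤ ∑ j ∈ univ.erase i, ‖B i j‖ * ‖v i‖ :=
        sum_le_sum fun j _ => mul_le_mul_of_nonneg_left (hmax j) (norm_nonneg _)
    _ = _ := (sum_mul _ _ _).symm

theorem norm_apply_eq_of_mulVec_eq_zero (hdom : ∑ j ∈ univ.erase i, ‖B i j‖ ≤ ‖B i i‖)
    {j : ι} (hij : B i j ≠ 0) : ‖v j‖ = ‖v i‖ := by
  obtain rfl | hji := eq_or_ne j i
  · rfl
  have hnonneg : ∀ k ∈ univ.erase i, 0 ≤ ‖B i k‖ * (‖v i‖ - ‖v k‖) := fun k _ =>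
    mul_nonneg (norm_nonneg _) (sub_nonneg.mpr (hmax k))
  have hsum : ∑ k ∈ univ.erase i, ‖B i k‖ * (‖v i‖ - ‖v k‖) = 0 := by
    refine le_antisymm ?_ (sum_nonneg hnonneg)
    have := norm_diag_mul_le_of_mulVec_eq_zero hBv i
    have := mul_le_mul_of_nonneg_right hdom (norm_nonneg (v i))
    simp only [mul_sub, sum_sub_distrib, ← sum_mul]
    linarith
  have hterm := (sum_eq_zero_iff_of_nonneg hnonneg).mp hsum j (mem_erase.mpr ⟨hji, mem_univ j⟩)
  rcases mul_eq_zero.mp hterm with h | h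
  · exact absurd (norm_eq_zero.mp h) hij
  · linarith

end MaxModulus

theorem det_ne_zero_of_weakly_chained_diag_dominant
    (hdom : ∀ i, ∑ j ∈ univ.erase i, ‖B i j‖ ≤ ‖B i i‖)
    (hchain : ∀ i, ∃ k, Relation.ReflTransGen (fun i j => B i j ≠ 0) i k ∧
      ∑ j ∈ univ.erase k, ‖B k j‖ < ‖B k k‖) :
    B.det ≠ 0 := by
  intro h0
  obtain ⟨v, hv, hBv⟩ := exists_mulVec_eq_zero_iff.mpr h0
  obtain ⟨i₀, hi₀⟩ := Function.ne_iff.mp hv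
  obtain ⟨i, -, hmax⟩ := exists_max_image univ (fun i => ‖v i‖) ⟨i₀, mem_univ _⟩
  have hvi : v i ≠ 0 :=
    norm_pos_iff.mp ((norm_pos_iff.mpr hi₀).trans_le (hmax i₀ (mem_univ _)))
  have hreach : ∀ k, Relation.ReflTransGen (fun i j => B i j ≠ 0) i k → ‖v k‖ = ‖v i‖ := by
    intro k hik
    induction hik with
    | refl => rfl
    | tail _ hbc ih =>
      rw [← ih]
      exact norm_apply_eq_of_mulVec_eq_zero hBv (fun j => ih ▸ hmax j (mem_univ j)) (hdom _) hbc
  obtain ⟨k, hik, hk⟩ := hchain i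
  have hmaxk := hreach k hik
  have hvk : v k ≠ 0 := by
    rw [← norm_ne_zero_iff, hmaxk]; exact norm_ne_zero_iff.mpr hvi
  exact (norm_diag_le_sum_row_of_mulVec_eq_zero hBv
    (fun j => hmaxk ▸ hmax j (mem_univ j)) hvk).not_gt hk

end NormedField

theorem det_eq_zero_of_sum_row_eq_zero_of_apply_eq_zero {R : Type*} [CommRing R]
    (B : Matrix ι ι R) (p : ι → Prop) [DecidablePred p] (hp : ∃ i, p i)
    (hzero : ∀ i, p i → ∀ j, ¬p j → B i j = 0) (hsum : ∀ i, p i → ∑ j, B i j = 0) :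
    B.det = 0 := by
  rw [twoBlockTriangular_det' B p hzero]
  suffices (toSquareBlockProp B p).det = 0 by rw [this, zero_mul]
  obtain ⟨i₀, hi₀⟩ := hp
  refine det_eq_zero_of_mulVec_eq_zero_of_mem_nonZeroDivisors (v := 1) (i := ⟨i₀, hi₀⟩) ?_
    (one_mem _)
  ext ⟨i, hi⟩
  have hout : ∑ j : {j // ¬p j}, B i j = 0 := sum_eq_zero fun j _ => hzero i hi j j.2
  rw [Pi.zero_apply, ← hsum i hi, ← Fintype.sum_subtype_add_sum_subtype p, hout, add_zero]
  simp [mulVec, dotProduct, toSquareBlockProp, toBlock]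

end Matrix

section Laplacian

variable {n : ℕ} (A : Matrix (Fin n) (Fin n) ℝ)

theorem lap_apply_self (i : Fin n) : lap A i i = ∑ k ∈ univ.erase i, A i k := by simp [lap]

theorem lap_apply_of_ne {i j : Fin n} (h : i ≠ j) : lap A i j = -A i j := by simp [lap, h]

theorem sum_lap_row (i : Fin n) : ∑ j, lap A i j = 0 := by
  rw [← add_sum_erase _ _ (mem_univ i), lap_apply_self, ← sum_add_distrib]
  exact sum_eq_zero fun j hj => by
    rw [lap_apply_of_ne A (ne_of_mem_erase hj).symm, add_neg_cancel]

theorem det_lap [NeZero n] : (lap A).det = 0 :=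
  det_eq_zero_of_sum_row_eq_zero_of_apply_eq_zero (lap A) (fun _ => True) ⟨0, trivial⟩
    (fun _ _ _ h => absurd trivial h) fun i _ => sum_lap_row A i

theorem sum_lap_submatrix_row (s : Finset (Fin n)) (i : s) :
    ∑ j : s, lap A i j = ∑ k ∈ sᶜ, A i k := by
  have hcompl : ∑ k ∈ sᶜ, lap A i k = -∑ k ∈ sᶜ, A i k := by
    rw [← sum_neg_distrib]
    exact sum_congr rfl fun k hk => lap_apply_of_ne A fun h => (mem_compl.mp hk) (h ▸ i.2)
  rw [sum_coe_sort s (lap A i), ← neg_neg (∑ k ∈ sᶜ, A i k), ← hcompl]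
  linarith [sum_add_sum_compl s (lap A i), sum_lap_row A i]

variable {A} (hA : ∀ i j, 0 ≤ A i j)
include hA

theorem sum_norm_lap_submatrix_row_add (s : Finset (Fin n)) (i : s) :
    ∑ j ∈ univ.erase i, ‖lap A i j‖ + ∑ k ∈ sᶜ, A i k = lap A i i := by
  have hoff : ∑ j ∈ univ.erase i, ‖lap A i j‖ = -∑ j ∈ univ.erase i, lap A i j := by
    rw [← sum_neg_distrib]
    refine sum_congr rfl fun j hj => ?_
    rw [lap_apply_of_ne A (Subtype.coe_ne_coe.mpr (ne_of_mem_erase hj).symm), norm_neg,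
      Real.norm_eq_abs, abs_of_nonneg (hA _ _), neg_neg]
  rw [hoff, ← sum_lap_submatrix_row A s i, ← add_sum_erase _ _ (mem_univ i)]
  ring

theorem det_lap_submatrix_nonneg (s : Finset (Fin n)) :
    0 ≤ ((lap A).submatrix ((↑) : s → Fin n) (↑)).det :=
  det_nonneg_of_sum_row_le_diag _ fun i =>
    (le_add_of_nonneg_right (sum_nonneg fun k _ => hA i k)).trans_eq
      (sum_norm_lap_submatrix_row_add hA s i)

theorem det_lap_submatrix_ne_zero_iff (s : Finset (Fin n)) :
    ((lap A).submatrix ((↑) : s → Fin n) (↑)).det ≠ 0 ↔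
      ∀ i ∈ s, ∃ r ∉ s, Relation.ReflTransGen (fun x y => 0 < A y x) r i := by
  classical
  set reached : Fin n → Prop :=
    fun i => ∃ r ∉ s, Relation.ReflTransGen (fun x y => 0 < A y x) r i
  have hcut : ∀ i k, ¬reached i → reached k → A i k = 0 := fun i k hi ⟨r, hr, hrk⟩ =>
    ((hA i k).eq_or_lt.resolve_right fun h => hi ⟨r, hr, hrk.tail h⟩).symm
  have hrow (i : s) : ∑ j ∈ univ.erase i, ‖lap A i j‖ + ∑ k ∈ sᶜ, A i k ≤ ‖lap A i i‖ :=
    (sum_norm_lap_submatrix_row_add hA s i).trans_le (Real.le_norm_self _)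
  constructor
  · intro hdet i hi
    by_contra hunreached
    refine hdet (det_eq_zero_of_sum_row_eq_zero_of_apply_eq_zero _ (fun i : s => ¬reached i)
      ⟨⟨i, hi⟩, hunreached⟩ (fun i hi j hj => ?_) fun i hi => ?_)
    · rw [not_not] at hj
      change lap A i j = 0
      rw [lap_apply_of_ne A fun h => hi (by rwa [h]), hcut _ _ hi hj, neg_zero]
    · exact (sum_lap_submatrix_row A s i).trans
        (sum_eq_zero fun k hk => hcut _ _ hi ⟨k, mem_compl.mp hk, .refl⟩)
  · intro hreach
    refine det_ne_zero_of_weakly_chained_diag_dominant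
      (fun i => le_of_add_le_of_nonneg_left (hrow i) (sum_nonneg fun k _ => hA i k)) fun i => ?_
    obtain ⟨r, hr, hri⟩ := hreach i i.2
    suffices ∀ x, Relation.ReflTransGen (fun x y => 0 < A y x) r x → ∀ hx : x ∈ s,
        ∃ k : s, Relation.ReflTransGen (fun a b : s => lap A a b ≠ 0) ⟨x, hx⟩ k ∧
          ∑ j ∈ univ.erase k, ‖lap A k j‖ < ‖lap A k k‖ from this i hri i.2
    intro x hrx
    induction hrx with
    | refl => exact fun hx => absurd hx hr
    | @tail b x _ hbx ih =>
      intro hx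
      by_cases hb : b ∈ s
      · obtain ⟨k, hbk, hk⟩ := ih hb
        obtain rfl | hxb := eq_or_ne x b
        · exact ⟨k, hbk, hk⟩
        · refine ⟨k, .head ?_ hbk, hk⟩
          rw [lap_apply_of_ne A hxb, neg_ne_zero]
          exact hbx.ne'
      · refine ⟨⟨x, hx⟩, .refl, lt_of_lt_of_le ?_ (hrow ⟨x, hx⟩)⟩
        exact lt_add_of_pos_right _ <|
          hbx.trans_le (single_le_sum (fun k _ => hA x k) (mem_compl.mpr hb))

end Laplacian

theorem Relation.exists_forall_reflTransGen_iff_exists_finset {α : Type*} [Fintype α]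
    [DecidableEq α] (R : α → α → Prop) :
    (∃ s : Finset α, s.card + 1 = Fintype.card α ∧
        ∀ i ∈ s, ∃ r ∉ s, Relation.ReflTransGen R r i) ↔
      ∃ r, ∀ i, Relation.ReflTransGen R r i := by
  constructor
  · rintro ⟨s, hcard, hs⟩
    obtain ⟨r, hr⟩ := card_eq_one.mp (show sᶜ.card = 1 by rw [card_compl]; omega)
    refine ⟨r, fun i => ?_⟩
    have hcompl : ∀ x ∉ s, x = r := fun x hx => mem_singleton.mp (hr ▸ mem_compl.mpr hx)
    by_cases hi : i ∈ s
    · obtain ⟨r', hr', hr'i⟩ := hs i hi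
      rwa [← hcompl r' hr']
    · rw [hcompl i hi]
  · rintro ⟨r, hr⟩
    refine ⟨univ.erase r, ?_, fun i _ => ⟨r, notMem_erase r _, hr i⟩⟩
    rw [card_erase_of_mem (mem_univ r), card_univ]
    have := Fintype.card_pos_iff.mpr ⟨r⟩
    omega

theorem zero_simple_eigenvalue_iff_directed_spanning_tree_general
    {n : ℕ} (A : Matrix (Fin n) (Fin n) ℝ)
    (hnonneg : ∀ i j, 0 ≤ A i j) :
    Polynomial.rootMultiplicity 0 (lap A).charpoly = 1 ↔
      ∃ r : Fin n, ∀ i : Fin n,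
        Relation.ReflTransGen (fun x y => 0 < A y x) r i := by
  rw [Polynomial.rootMultiplicity_eq_natTrailingDegree',
    Polynomial.natTrailingDegree_eq_one_iff (charpoly_monic _).ne_zero]
  rcases n with _ | m
  · simp [charpoly_isEmpty]
  have hcoeff0 : (lap A).charpoly.coeff 0 = 0 := by
    simpa [det_lap] using (det_eq_sign_charpoly_coeff (lap A)).symm
  have hcoeff1 := charpoly_coeff_eq_sum_minors (lap A) m (by simp)
  rw [Fintype.card_fin, Nat.add_sub_cancel_left] at hcoeff1
  rw [hcoeff0, hcoeff1, ← Relation.exists_forall_reflTransGen_iff_exists_finset]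
  simp [sum_eq_zero_iff_of_nonneg fun s _ => det_lap_submatrix_nonneg hnonneg s,
    det_lap_submatrix_ne_zero_iff hnonneg]

/-- For a nonnegative adjacency matrix `A` with Laplacian `L`, zero is an algebraically
simple eigenvalue of `L` (its multiplicity as a root of the characteristic polynomial is
one) if and only if the associated directed graph — with an edge from `j` to `i`
whenever `a_ij > 0` — has a directed spanning tree, i.e. there is a vertex `r` from
which every vertex is reachable along directed edges. -/
theorem zero_simple_eigenvalue_iff_directed_spanning_tree
    {n : ℕ} (A : Matrix (Fin n) (Fin n) ℝ)
    (hnonneg : ∀ i j, 0 ≤ A i j) (hdiag : ∀ i, A i i = 0) :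
    Polynomial.rootMultiplicity 0 (lap A).charpoly = 1 ↔
      ∃ r : Fin n, ∀ i : Fin n,
        Relation.ReflTransGen (fun x y => 0 < A y x) r i :=
  zero_simple_eigenvalue_iff_directed_spanning_tree_general A hnonneg
end

section
/- Let A be a nonnegative adjacency matrix on n agents with Laplacian L. Then the matrix exponential exp(-tL) converges, as t → ∞, to a rank-one matrix of the form 1·νᵀ with ν ∈ ℝ^n entrywise nonnegative, νᵀ1 = 1 and νᵀL = 0, if and only if the associated directed graph has a directed spanning tree. In particular, under this condition, for every initial state x₀ the solution X(t) = exp(-tL)x₀ satisfies Xᵢ(t) - Xⱼ(t) → 0 for all i, j (consensus), with common limit νᵀx₀. -/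
open Matrix Finset Filter

/-!
Write `E t = exp (-t L)`. As `L` has nonpositive off-diagonal entries and zero row sums, `E` is a
semigroup of row-stochastic matrices for `t ≥ 0`.

If a vertex `r` reaches every vertex, column `r` of `E 1` is positive, so applying `E 1` shrinks
the spread `max - min` of a vector by a factor `1 - δ < 1`. The maximum and the minimum of the
entries of `E t x` are monotone in `t`, hence squeeze to a common limit, and `E t → 1 νᵀ`. The
limit `P` satisfies `P E s = P` for all `s`; differentiating at `s = 0` gives `νᵀ L = 0`.

Conversely, the vertices that reach a vertex `i` index an invariant block of `L`, so
`E t i j = 0` whenever `j` does not reach `i`; any `j` with `ν j ≠ 0` therefore reaches every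
vertex.
-/

open Topology NormedSpace
open scoped Nat

theorem exists_tendsto_of_monotone_of_antitone {ι : Type*} [SemilatticeSup ι] [Nonempty ι]
    {a b : ι → ℝ} (hb : Monotone b) (ha : Antitone a) (hba : b ≤ a)
    (hgap : Tendsto (a - b) atTop (𝓝 0)) :
    ∃ c, Tendsto b atTop (𝓝 c) ∧ Tendsto a atTop (𝓝 c) := by
  obtain ⟨t₀⟩ := ‹Nonempty ι›
  obtain ⟨c, hc⟩ : ∃ c, Tendsto b atTop (𝓝 c) := by
    refine (tendsto_atTop_of_monotone hb).resolve_left fun h => ?_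
    obtain ⟨t, hbt, ht⟩ := ((h.eventually_gt_atTop (a t₀)).and (eventually_ge_atTop t₀)).exists
    exact (hbt.trans_le (hba t)).not_ge (ha ht)
  exact ⟨c, hc, by simpa using hc.add hgap⟩

namespace Matrix

theorem tendsto_mulVec_apply_of_tendsto {ι α : Type*} [Fintype ι] {l : Filter α}
    {E : α → Matrix ι ι ℝ} {ν : ι → ℝ} (hlim : Tendsto E l (𝓝 (of fun _ j => ν j)))
    (x : ι → ℝ) (i : ι) :
    Tendsto (fun t => (E t *ᵥ x) i) l (𝓝 (ν ⬝ᵥ x)) := by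
  have hcont : Continuous fun M : Matrix ι ι ℝ => M *ᵥ x :=
    continuous_id.matrix_mulVec continuous_const
  simpa [mulVec, dotProduct] using tendsto_pi_nhds.1 ((hcont.tendsto _).comp hlim) i

theorem mul_eq_self_of_tendsto {ι : Type*} [Fintype ι] {E : ℝ → Matrix ι ι ℝ}
    (hE : ∀ s t, E (s + t) = E s * E t) {P : Matrix ι ι ℝ}
    (hlim : Tendsto E atTop (𝓝 P)) (s : ℝ) : P * E s = P := by
  refine tendsto_nhds_unique (hlim.mul_const (E s)) ?_
  exact (hlim.comp (tendsto_atTop_add_const_right atTop s tendsto_id)).congr fun t => hE t s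

variable {ι : Type*} [Fintype ι] [DecidableEq ι]

theorem hasSum_exp (X : Matrix ι ι ℝ) :
    HasSum (fun k : ℕ => (k ! : ℝ)⁻¹ • X ^ k) (exp X) := by
  let := Matrix.linftyOpNormedRing (n := ι) (α := ℝ)
  let := Matrix.linftyOpNormedAlgebra (n := ι) (R := ℝ) (α := ℝ)
  exact exp_series_hasSum_exp' X

theorem hasSum_exp_apply (X : Matrix ι ι ℝ) (i j : ι) :
    HasSum (fun k : ℕ => (k ! : ℝ)⁻¹ * (X ^ k) i j) (exp X i j) :=
  Pi.hasSum.mp (Pi.hasSum.mp (hasSum_exp X) i) j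

theorem exp_mulVec_of_mulVec_eq_zero {X : Matrix ι ι ℝ} {v : ι → ℝ} (h : X *ᵥ v = 0) :
    exp X *ᵥ v = v := by
  have hsum := (hasSum_exp X).map ((mulVecBilin ℝ ℝ).flip v)
    (continuous_id.matrix_mulVec continuous_const)
  refine hsum.unique (hasSum_single 0 fun k hk => ?_) |>.trans (by simp)
  obtain ⟨k, rfl⟩ := Nat.exists_eq_succ_of_ne_zero hk
  simp [_root_.pow_succ, h]

theorem exp_apply_nonneg {X : Matrix ι ι ℝ} (hX : ∀ i j, 0 ≤ X i j) (i j : ι) :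
    0 ≤ exp X i j :=
  (hasSum_exp_apply X i j).nonneg fun k => mul_nonneg (by positivity) (pow_apply_nonneg hX k i j)

theorem exists_pow_apply_pos_of_reflTransGen {X : Matrix ι ι ℝ} (hX : ∀ i j, 0 ≤ X i j)
    {i j : ι} (h : Relation.ReflTransGen (fun x y => 0 < X y x) j i) :
    ∃ m, 0 < (X ^ m) i j := by
  induction h with
  | refl => exact ⟨0, by simp⟩
  | @tail b c _ hbc ih =>
    obtain ⟨m, hm⟩ := ih
    refine ⟨m + 1, ?_⟩
    rw [_root_.pow_succ', mul_apply]
    exact sum_pos' (fun l _ => mul_nonneg (hX c l) (pow_apply_nonneg hX m l j))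
      ⟨b, mem_univ b, mul_pos hbc hm⟩

theorem exp_apply_pos_of_reflTransGen {X : Matrix ι ι ℝ} (hX : ∀ i j, 0 ≤ X i j)
    {i j : ι} (h : Relation.ReflTransGen (fun x y => 0 < X y x) j i) :
    0 < exp X i j := by
  obtain ⟨m, hm⟩ := exists_pow_apply_pos_of_reflTransGen hX h
  exact lt_of_lt_of_le (by positivity) (le_hasSum (hasSum_exp_apply X i j) m fun k _ =>
    mul_nonneg (by positivity) (pow_apply_nonneg hX k i j))

theorem exp_add_smul_one (X : Matrix ι ι ℝ) (c : ℝ) :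
    exp (X + c • 1) = Real.exp c • exp X := by
  rw [exp_add_of_commute _ _ ((Commute.one_right X).smul_right c), smul_one_eq_diagonal,
    exp_diagonal, Pi.exp_def, ← Real.exp_eq_exp_ℝ, ← smul_one_eq_diagonal, mul_smul_one]

theorem exp_neg_smul_eq_smul_exp_smul (L : Matrix ι ι ℝ) (c t : ℝ) :
    exp ((-t) • L) = Real.exp (-(t * c)) • exp (t • (c • 1 - L)) := by
  rw [← exp_add_smul_one]
  congr 1
  module

theorem mul_eq_zero_of_forall_mul_exp_smul_eq {X P : Matrix ι ι ℝ}
    (h : ∀ s : ℝ, P * exp (s • X) = P) : P * X = 0 := by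
  let := Matrix.linftyOpNormedRing (n := ι) (α := ℝ)
  let := Matrix.linftyOpNormedAlgebra (n := ι) (R := ℝ) (α := ℝ)
  have hderiv := (hasDerivAt_exp_smul_const (𝕂 := ℝ) X 0).const_mul P
  have := hderiv.unique ((hasDerivAt_const (0 : ℝ) P).congr_of_eventuallyEq
    (.of_forall fun s => h s))
  simpa using this

theorem isClosed_rowStochastic : IsClosed (rowStochastic ℝ ι : Set (Matrix ι ι ℝ)) := by
  have : (rowStochastic ℝ ι : Set (Matrix ι ι ℝ)) =
      (⋂ i, ⋂ j, {M | 0 ≤ M i j}) ∩ {M | M *ᵥ 1 = 1} := by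
    ext M; simp [mem_rowStochastic]
  rw [this]
  exact (isClosed_iInter fun i => isClosed_iInter fun j =>
    isClosed_le continuous_const (by fun_prop)).inter
    (isClosed_eq (continuous_id.matrix_mulVec continuous_const) continuous_const)

section RowStochastic

variable {Q : Matrix ι ι ℝ} {x : ι → ℝ}

theorem mulVec_apply_le_of_le_col (hQ : Q ∈ rowStochastic ℝ ι) {r : ι} {δ b : ℝ}
    (hδ : ∀ i, δ ≤ Q i r) (hx : ∀ j, x j ≤ b) (i : ι) :
    (Q *ᵥ x) i ≤ δ * x r + (1 - δ) * b := by
  set w := Q i - Pi.single r δ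
  have hw : 0 ≤ w := fun j => by
    rcases eq_or_ne j r with rfl | hj
    · simpa [w] using hδ i
    · simpa [w, hj] using nonneg_of_mem_rowStochastic hQ
  have hsum : ∑ j, w j = 1 - δ := by
    simp [w, sum_sub_distrib, sum_row_of_mem_rowStochastic hQ]
  calc (Q *ᵥ x) i = δ * x r + w ⬝ᵥ x := by simp [w, mulVec, sub_dotProduct]
    _ ≤ δ * x r + w ⬝ᵥ fun _ => b := by
      gcongr; exact dotProduct_le_dotProduct_of_nonneg_left hx hw
    _ = δ * x r + (1 - δ) * b := by simp [dotProduct, ← sum_mul, hsum]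

theorem le_mulVec_apply_of_le_col (hQ : Q ∈ rowStochastic ℝ ι) {r : ι} {δ a : ℝ}
    (hδ : ∀ i, δ ≤ Q i r) (hx : ∀ j, a ≤ x j) (i : ι) :
    δ * x r + (1 - δ) * a ≤ (Q *ᵥ x) i := by
  have := mulVec_apply_le_of_le_col hQ hδ (x := -x) (b := -a) (fun j => neg_le_neg (hx j)) i
  simp only [mulVec_neg, Pi.neg_apply] at this
  linarith

theorem mulVec_apply_le (hQ : Q ∈ rowStochastic ℝ ι) {b : ℝ} (hx : ∀ j, x j ≤ b) (i : ι) :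
    (Q *ᵥ x) i ≤ b := by
  simpa using mulVec_apply_le_of_le_col hQ (r := i) (fun _ => nonneg_of_mem_rowStochastic hQ) hx i

theorem le_mulVec_apply (hQ : Q ∈ rowStochastic ℝ ι) {a : ℝ} (hx : ∀ j, a ≤ x j) (i : ι) :
    a ≤ (Q *ᵥ x) i := by
  simpa using le_mulVec_apply_of_le_col hQ (r := i) (fun _ => nonneg_of_mem_rowStochastic hQ) hx i

variable [Nonempty ι]

theorem sup'_mulVec_le (hQ : Q ∈ rowStochastic ℝ ι) (x : ι → ℝ) :
    univ.sup' univ_nonempty (Q *ᵥ x) ≤ univ.sup' univ_nonempty x :=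
  sup'_le _ _ fun i _ => mulVec_apply_le hQ (fun j => le_sup' x (mem_univ j)) i

theorem inf'_le_inf'_mulVec (hQ : Q ∈ rowStochastic ℝ ι) (x : ι → ℝ) :
    univ.inf' univ_nonempty x ≤ univ.inf' univ_nonempty (Q *ᵥ x) :=
  le_inf' _ _ fun i _ => le_mulVec_apply hQ (fun j => inf'_le x (mem_univ j)) i

theorem sup'_sub_inf'_mulVec_le (hQ : Q ∈ rowStochastic ℝ ι) {r : ι} {δ : ℝ}
    (hδ : ∀ i, δ ≤ Q i r) (x : ι → ℝ) :
    univ.sup' univ_nonempty (Q *ᵥ x) - univ.inf' univ_nonempty (Q *ᵥ x) ≤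
      (1 - δ) * (univ.sup' univ_nonempty x - univ.inf' univ_nonempty x) := by
  set M := univ.sup' univ_nonempty x
  set m := univ.inf' univ_nonempty x
  have hsup : univ.sup' univ_nonempty (Q *ᵥ x) ≤ δ * x r + (1 - δ) * M :=
    sup'_le _ _ fun i _ => mulVec_apply_le_of_le_col hQ hδ (fun j => le_sup' x (mem_univ j)) i
  have hinf : δ * x r + (1 - δ) * m ≤ univ.inf' univ_nonempty (Q *ᵥ x) :=
    le_inf' _ _ fun i _ => le_mulVec_apply_of_le_col hQ hδ (fun j => inf'_le x (mem_univ j)) i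
  linarith

end RowStochastic

section Semigroup

variable {E : ℝ → Matrix ι ι ℝ}

theorem sup'_sub_inf'_mulVec_le_pow [Nonempty ι] (hE : ∀ s t, E (s + t) = E s * E t)
    (hE₁ : E 1 ∈ rowStochastic ℝ ι) {r : ι} {δ : ℝ} (hδ : ∀ i, δ ≤ E 1 i r)
    (x : ι → ℝ) (m : ℕ) :
    univ.sup' univ_nonempty (E m *ᵥ x) - univ.inf' univ_nonempty (E m *ᵥ x) ≤
      (1 - δ) ^ m * (univ.sup' univ_nonempty (E 0 *ᵥ x) - univ.inf' univ_nonempty (E 0 *ᵥ x)) := by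
  have hδ₁ : δ ≤ 1 := (hδ r).trans (le_one_of_mem_rowStochastic hE₁)
  induction m with
  | zero => simp
  | succ m ih =>
    rw [Nat.cast_succ, add_comm, hE, ← mulVec_mulVec, _root_.pow_succ', mul_assoc]
    exact (sup'_sub_inf'_mulVec_le hE₁ hδ _).trans
      (mul_le_mul_of_nonneg_left ih (sub_nonneg.2 hδ₁))

theorem exists_tendsto_mulVec_apply (hE : ∀ s t, E (s + t) = E s * E t)
    (hstoch : ∀ t, 0 ≤ t → E t ∈ rowStochastic ℝ ι) {r : ι} {δ : ℝ} (hδ₀ : 0 < δ)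
    (hδ : ∀ i, δ ≤ E 1 i r) (x : ι → ℝ) :
    ∃ c, ∀ i, Tendsto (fun t => (E t *ᵥ x) i) atTop (𝓝 c) := by
  have : Nonempty ι := ⟨r⟩
  set a : ℝ → ℝ := fun t => univ.sup' univ_nonempty (E t *ᵥ x)
  set b : ℝ → ℝ := fun t => univ.inf' univ_nonempty (E t *ᵥ x)
  have hshift : ∀ s t, E t *ᵥ x = E (t - s) *ᵥ (E s *ᵥ x) := fun s t => by
    rw [mulVec_mulVec, ← hE, sub_add_cancel]
  have ha : Antitone a := fun s t hst => by
    simpa only [a, ← hshift] using sup'_mulVec_le (hstoch _ (sub_nonneg.2 hst)) (E s *ᵥ x)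
  have hb : Monotone b := fun s t hst => by
    simpa only [b, ← hshift] using inf'_le_inf'_mulVec (hstoch _ (sub_nonneg.2 hst)) (E s *ᵥ x)
  have hba : b ≤ a := fun t => (inf'_le _ (mem_univ r)).trans (le_sup' _ (mem_univ r))
  have hδ₁ : δ ≤ 1 := (hδ r).trans (le_one_of_mem_rowStochastic (hstoch 1 zero_le_one))
  have hgap : Tendsto (a - b) atTop (𝓝 0) := by
    have hpow := ((tendsto_pow_atTop_nhds_zero_of_lt_one (sub_nonneg.2 hδ₁)
      (sub_lt_self 1 hδ₀)).comp (tendsto_nat_floor_atTop (α := ℝ))).mul_const (a 0 - b 0)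
    rw [zero_mul] at hpow
    refine squeeze_zero' (.of_forall fun t => sub_nonneg.2 (hba t)) ?_ hpow
    filter_upwards [eventually_ge_atTop 0] with t ht
    calc a t - b t ≤ a (⌊t⌋₊ : ℕ) - b (⌊t⌋₊ : ℕ) :=
          sub_le_sub (ha (Nat.floor_le ht)) (hb (Nat.floor_le ht))
      _ ≤ _ := sup'_sub_inf'_mulVec_le_pow hE (hstoch 1 zero_le_one) hδ x _
  obtain ⟨c, hbc, hac⟩ := exists_tendsto_of_monotone_of_antitone hb ha hba hgap
  exact ⟨c, fun i => tendsto_of_tendsto_of_tendsto_of_le_of_le hbc hac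
    (fun t => inf'_le _ (mem_univ i)) (fun t => le_sup' _ (mem_univ i))⟩

theorem exists_tendsto_of_col_pos (hE : ∀ s t, E (s + t) = E s * E t)
    (hstoch : ∀ t, 0 ≤ t → E t ∈ rowStochastic ℝ ι) {r : ι} (hcol : ∀ i, 0 < E 1 i r) :
    ∃ ν : ι → ℝ, Tendsto E atTop (𝓝 (of fun _ j => ν j)) := by
  obtain ⟨δ, hδ₀, hδ⟩ : ∃ δ > 0, ∀ i, δ ≤ E 1 i r :=
    ⟨univ.inf' ⟨r, mem_univ r⟩ fun i => E 1 i r, (lt_inf'_iff _).2 fun i _ => hcol i,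
      fun i => inf'_le _ (mem_univ i)⟩
  choose ν hν using fun j => exists_tendsto_mulVec_apply hE hstoch hδ₀ hδ (Pi.single j 1)
  refine ⟨ν, tendsto_pi_nhds.2 fun i => tendsto_pi_nhds.2 fun j => ?_⟩
  simpa [mulVec_single_one] using hν j i

end Semigroup

end Matrix

section Laplacian

variable {n : ℕ} {A : Matrix (Fin n) (Fin n) ℝ}

theorem lap_mulVec_one (A : Matrix (Fin n) (Fin n) ℝ) : lap A *ᵥ 1 = 0 := by
  ext i
  have hoff : ∑ j ∈ univ.erase i, lap A i j = -∑ j ∈ univ.erase i, A i j := by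
    rw [← sum_neg_distrib]
    exact sum_congr rfl fun j hj => if_neg (ne_of_mem_erase hj).symm
  simp only [mulVec, dotProduct, Pi.one_apply, mul_one, Pi.zero_apply]
  rw [← add_sum_erase _ _ (mem_univ i), hoff]
  simp [lap]

theorem le_smul_one_sub_lap (hA : ∀ i j, 0 ≤ A i j) (i j : Fin n) :
    A i j ≤ ((∑ p, ∑ q, A p q) • 1 - lap A) i j := by
  rcases eq_or_ne i j with rfl | hij
  · have hrow : ∑ q, A i q ≤ ∑ p, ∑ q, A p q :=
      single_le_sum (f := fun p => ∑ q, A p q) (fun p _ => sum_nonneg fun q _ => hA p q)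
        (mem_univ i)
    simp only [lap, Matrix.sub_apply, Matrix.smul_apply, one_apply_eq, smul_eq_mul, mul_one,
      of_apply, ↓reduceIte, sum_erase_eq_sub (mem_univ i)]
    linarith
  · simp [lap, hij]

theorem exp_neg_smul_lap_mem_rowStochastic (hA : ∀ i j, 0 ≤ A i j) {t : ℝ} (ht : 0 ≤ t) :
    exp ((-t) • lap A) ∈ rowStochastic ℝ (Fin n) := by
  refine mem_rowStochastic.2 ⟨fun i j => ?_, exp_mulVec_of_mulVec_eq_zero ?_⟩
  · rw [Matrix.exp_neg_smul_eq_smul_exp_smul _ (∑ p, ∑ q, A p q)]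
    exact mul_nonneg (Real.exp_pos _).le (exp_apply_nonneg (fun p q =>
      mul_nonneg ht ((hA p q).trans (le_smul_one_sub_lap hA p q))) i j)
  · rw [smul_mulVec, lap_mulVec_one, smul_zero]

theorem exp_neg_one_smul_lap_apply_pos (hA : ∀ i j, 0 ≤ A i j) {r i : Fin n}
    (h : Relation.ReflTransGen (fun x y => 0 < A y x) r i) :
    0 < exp ((-1 : ℝ) • lap A) i r := by
  rw [Matrix.exp_neg_smul_eq_smul_exp_smul _ (∑ p, ∑ q, A p q), one_smul]
  refine mul_pos (Real.exp_pos _) (exp_apply_pos_of_reflTransGen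
    (fun p q => (hA p q).trans (le_smul_one_sub_lap hA p q)) ?_)
  exact Relation.ReflTransGen.mono
    (fun x y (hxy : 0 < A y x) => hxy.trans_le (le_smul_one_sub_lap hA y x)) _ _ h

theorem exp_neg_smul_lap_apply_eq_zero (hA : ∀ i j, 0 ≤ A i j) {r i : Fin n}
    (h : ¬Relation.ReflTransGen (fun x y => 0 < A y x) r i) (t : ℝ) :
    exp ((-t) • lap A) i r = 0 := by
  -- block triangularity for the order on `Prop` (`False < True`) of "`x` reaches `i`"
  have hblock : ((-t) • lap A).BlockTriangular
      fun x => Relation.ReflTransGen (fun x y => 0 < A y x) x i := by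
    intro p q hqp
    obtain ⟨hp, hq⟩ := Classical.not_imp.1 hqp.not_ge
    have hpq : p ≠ q := by rintro rfl; exact hq hp
    have hApq : A p q = 0 := ((hA p q).lt_or_eq.resolve_left fun hpos => hq (hp.head hpos)).symm
    simp [lap, hpq, hApq]
  exact hblock.exp (lt_of_le_not_ge (fun _ => .refl) fun hle => h (hle .refl))

theorem exists_reflTransGen_of_tendsto_exp_neg_smul_lap (hA : ∀ i j, 0 ≤ A i j)
    {ν : Fin n → ℝ} (hν : ∑ i, ν i = 1)
    (hlim : Tendsto (fun t : ℝ => exp ((-t) • lap A)) atTop (𝓝 (of fun _ j => ν j))) :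
    ∃ r, ∀ i, Relation.ReflTransGen (fun x y => 0 < A y x) r i := by
  obtain ⟨r, -, hr⟩ := exists_ne_zero_of_sum_ne_zero (hν ▸ one_ne_zero)
  refine ⟨r, fun i => by_contra fun h => hr ?_⟩
  have hentry := tendsto_pi_nhds.1 (tendsto_pi_nhds.1 hlim i) r
  simp only [exp_neg_smul_lap_apply_eq_zero hA h] at hentry
  exact (tendsto_nhds_unique tendsto_const_nhds hentry).symm

theorem exists_tendsto_exp_neg_smul_lap_of_reflTransGen (hA : ∀ i j, 0 ≤ A i j) {r : Fin n}
    (hr : ∀ i, Relation.ReflTransGen (fun x y => 0 < A y x) r i) :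
    ∃ ν : Fin n → ℝ, (∀ i, 0 ≤ ν i) ∧ ∑ i, ν i = 1 ∧ ν ᵥ* lap A = 0 ∧
      Tendsto (fun t : ℝ => exp ((-t) • lap A)) atTop (𝓝 (of fun _ j => ν j)) := by
  set E := fun t : ℝ => exp ((-t) • lap A)
  have hE : ∀ s t, E (s + t) = E s * E t := fun s t => by
    show exp ((-(s + t)) • lap A) = exp ((-s) • lap A) * exp ((-t) • lap A)
    rw [neg_add, add_smul, exp_add_of_commute _ _ ((Commute.refl _).smul_left _ |>.smul_right _)]
  have hstoch : ∀ t, 0 ≤ t → E t ∈ rowStochastic ℝ (Fin n) :=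
    fun t => exp_neg_smul_lap_mem_rowStochastic hA
  obtain ⟨ν, hlim⟩ :=
    exists_tendsto_of_col_pos hE hstoch fun i => exp_neg_one_smul_lap_apply_pos hA (hr i)
  have hP := isClosed_rowStochastic.mem_of_tendsto hlim ((eventually_ge_atTop 0).mono hstoch)
  have hPL : (of fun _ j => ν j : Matrix (Fin n) (Fin n) ℝ) * lap A = 0 := by
    have := mul_eq_zero_of_forall_mul_exp_smul_eq (X := -lap A) fun s => by
      simpa [E, smul_neg] using mul_eq_self_of_tendsto hE hlim s
    rwa [mul_neg, neg_eq_zero] at this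
  refine ⟨ν, fun j => nonneg_of_mem_rowStochastic hP (i := r), by
    simpa using sum_row_of_mem_rowStochastic hP r, ?_, hlim⟩
  ext j
  simpa [mul_apply, vecMul, dotProduct] using congr_fun (congr_fun hPL r) j

end Laplacian

theorem exp_neg_laplacian_tendsto_rank_one_iff_spanning_tree_general
    {n : ℕ} (A : Matrix (Fin n) (Fin n) ℝ)
    (hnonneg : ∀ i j, 0 ≤ A i j) :
    ((∃ ν : Fin n → ℝ, (∀ i, 0 ≤ ν i) ∧ (∑ i, ν i) = 1 ∧ ν ᵥ* lap A = 0 ∧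
        Tendsto (fun t : ℝ => NormedSpace.exp ((-t) • lap A)) atTop
          (nhds (Matrix.of fun _ j => ν j))) ↔
      (∃ r : Fin n, ∀ i : Fin n,
        Relation.ReflTransGen (fun x y => 0 < A y x) r i)) ∧
    (∀ ν : Fin n → ℝ, (∀ i, 0 ≤ ν i) → (∑ i, ν i) = 1 → ν ᵥ* lap A = 0 →
      Tendsto (fun t : ℝ => NormedSpace.exp ((-t) • lap A)) atTop
        (nhds (Matrix.of fun _ j => ν j)) →
      ∀ x₀ : Fin n → ℝ,
        (∀ i j : Fin n, Tendsto
          (fun t : ℝ => (NormedSpace.exp ((-t) • lap A) *ᵥ x₀) i -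
            (NormedSpace.exp ((-t) • lap A) *ᵥ x₀) j) atTop (nhds 0)) ∧
        (∀ i : Fin n, Tendsto
          (fun t : ℝ => (NormedSpace.exp ((-t) • lap A) *ᵥ x₀) i) atTop
          (nhds (ν ⬝ᵥ x₀)))) := by
  refine ⟨⟨fun ⟨ν, _, hν, _, hlim⟩ => ?_, fun ⟨r, hr⟩ => ?_⟩, fun ν _ _ _ hlim x₀ => ?_⟩
  · exact exists_reflTransGen_of_tendsto_exp_neg_smul_lap hnonneg hν hlim
  · exact exists_tendsto_exp_neg_smul_lap_of_reflTransGen hnonneg hr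
  have hconv := tendsto_mulVec_apply_of_tendsto hlim x₀
  exact ⟨fun i j => by simpa using (hconv i).sub (hconv j), hconv⟩

/-- `exp(-tL)` converges, as `t → ∞`, to a rank-one matrix `1·νᵀ` with `ν ≥ 0`,
`νᵀ1 = 1` and `νᵀL = 0` if and only if the associated directed graph (edge from `j` to
`i` whenever `a_ij > 0`) has a directed spanning tree.  In particular, under this
condition every solution `X(t) = exp(-tL) x₀` reaches consensus:
`Xᵢ(t) - Xⱼ(t) → 0` for all `i, j`, with common limit `νᵀx₀`. -/
theorem exp_neg_laplacian_tendsto_rank_one_iff_spanning_tree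
    {n : ℕ} (A : Matrix (Fin n) (Fin n) ℝ)
    (hnonneg : ∀ i j, 0 ≤ A i j) (hdiag : ∀ i, A i i = 0) :
    ((∃ ν : Fin n → ℝ, (∀ i, 0 ≤ ν i) ∧ (∑ i, ν i) = 1 ∧ ν ᵥ* lap A = 0 ∧
        Tendsto (fun t : ℝ => NormedSpace.exp ((-t) • lap A)) atTop
          (nhds (Matrix.of fun _ j => ν j))) ↔
      (∃ r : Fin n, ∀ i : Fin n,
        Relation.ReflTransGen (fun x y => 0 < A y x) r i)) ∧
    (∀ ν : Fin n → ℝ, (∀ i, 0 ≤ ν i) → (∑ i, ν i) = 1 → ν ᵥ* lap A = 0 →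
      Tendsto (fun t : ℝ => NormedSpace.exp ((-t) • lap A)) atTop
        (nhds (Matrix.of fun _ j => ν j)) →
      ∀ x₀ : Fin n → ℝ,
        (∀ i j : Fin n, Tendsto
          (fun t : ℝ => (NormedSpace.exp ((-t) • lap A) *ᵥ x₀) i -
            (NormedSpace.exp ((-t) • lap A) *ᵥ x₀) j) atTop (nhds 0)) ∧
        (∀ i : Fin n, Tendsto
          (fun t : ℝ => (NormedSpace.exp ((-t) • lap A) *ᵥ x₀) i) atTop
          (nhds (ν ⬝ᵥ x₀)))) :=
  exp_neg_laplacian_tendsto_rank_one_iff_spanning_tree_general A hnonneg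
end

section
/- Let {A_1, …, A_m} be a finite set of row-stochastic n×n matrices such that every finite product A_{i_k} A_{i_{k-1}} ⋯ A_{i_1} (each i_j ∈ {1,…,m}) is SIA. Then for every ε > 0 there exists an integer N such that every product of length k ≥ N of matrices from the set is within ε, entrywise, of some rank-one row-stochastic matrix of the form 1·cᵀ (where c may depend on the product). -/
/-!
Call a matrix scrambling if any two of its rows have a positive entry in a common column. For a
stochastic matrix `P` whose rows pairwise overlap, `∑ k, min (P i k) (P i' k) ≥ a > 0`, multiplying
on the left by `P` shrinks the spread `max_{i,i'} (Q i j - Q i' j)` of every column of `Q` by the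
factor `1 - a`.

Products of length at least `N`, the number of positivity patterns, are scrambling: by
pigeonhole two prefixes `P` and `P * Q` of the word have the same pattern, which then persists in
all `P * Q ^ k`; as `Q` is SIA, some `Q ^ k` has a positive column, so `P` and with it the whole
product is scrambling. The products of length `N` are finitely many, so their overlaps are bounded
below by one `a > 0`, and a product of length at least `r * N` has all column spreads at most
`(1 - a) ^ r`.
-/

open Matrix Finset Filter

/-- A row-stochastic matrix `P` is SIA (stochastic, indecomposable and aperiodic) if
`P^k` converges to a rank-one matrix `1·yᵀ` for some vector `y`. -/
def IsSIA {n : ℕ} (P : Matrix (Fin n) (Fin n) ℝ) : Prop :=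
  ∃ y : Fin n → ℝ,
    Tendsto (fun k : ℕ => P ^ k) atTop (nhds (Matrix.of fun _ j => y j))

theorem Set.Finite.exists_pos_forall_le {β : Type*} {s : Set β} (hs : s.Finite) {f : β → ℝ}
    (hf : ∀ x ∈ s, 0 < f x) : ∃ a > 0, ∀ x ∈ s, a ≤ f x := by
  rcases s.eq_empty_or_nonempty with rfl | hne
  · exact ⟨1, one_pos, by simp⟩
  · obtain ⟨x, hx, hmin⟩ := Set.exists_min_image s f hs hne
    exact ⟨f x, hf x hx, hmin⟩

namespace Matrix

variable {ι : Type*}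

def IsScrambling (P : Matrix ι ι ℝ) : Prop :=
  ∀ i i', ∃ j, 0 < P i j ∧ 0 < P i' j

theorem IsScrambling.of_pos_iff {P Q : Matrix ι ι ℝ} (h : ∀ i j, 0 < P i j ↔ 0 < Q i j)
    (hP : IsScrambling P) : IsScrambling Q := fun i i' =>
  let ⟨j, hj, hj'⟩ := hP i i'
  ⟨j, (h i j).1 hj, (h i' j).1 hj'⟩

variable [Fintype ι]

def rowOverlap (P : Matrix ι ι ℝ) (i i' : ι) : ℝ :=
  ∑ k, min (P i k) (P i' k)

theorem mul_apply_pos_iff {P Q : Matrix ι ι ℝ} (hP : ∀ i j, 0 ≤ P i j)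
    (hQ : ∀ i j, 0 ≤ Q i j) (i j : ι) : 0 < (P * Q) i j ↔ ∃ k, 0 < P i k ∧ 0 < Q k j := by
  rw [mul_apply, sum_pos_iff_of_nonneg fun k _ => mul_nonneg (hP i k) (hQ k j)]
  simp only [mem_univ, true_and]
  refine exists_congr fun k => ⟨fun h => ?_, fun h => mul_pos h.1 h.2⟩
  exact ⟨(hP i k).lt_of_ne' (left_ne_zero_of_mul h.ne'),
    (hQ k j).lt_of_ne' (right_ne_zero_of_mul h.ne')⟩

theorem IsScrambling.rowOverlap_pos {P : Matrix ι ι ℝ} (hP : ∀ i j, 0 ≤ P i j)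
    (hPs : IsScrambling P) (i i' : ι) : 0 < rowOverlap P i i' := by
  obtain ⟨j, hj, hj'⟩ := hPs i i'
  exact (sum_pos_iff_of_nonneg fun k _ => le_min (hP i k) (hP i' k)).2
    ⟨j, mem_univ j, lt_min hj hj'⟩

variable [DecidableEq ι]

theorem exists_pos_of_mem_rowStochastic {P : Matrix ι ι ℝ} (hP : P ∈ rowStochastic ℝ ι)
    (i : ι) : ∃ j, 0 < P i j := by
  obtain ⟨j, -, hj⟩ := exists_lt_of_sum_lt (s := univ) (f := 0) (g := P i)
    (by simp [sum_row_of_mem_rowStochastic hP i])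
  exact ⟨j, hj⟩

theorem IsScrambling.mul_left {P Q : Matrix ι ι ℝ} (hP : P ∈ rowStochastic ℝ ι)
    (hQ : ∀ i j, 0 ≤ Q i j) (hQs : IsScrambling Q) : IsScrambling (P * Q) := by
  intro i i'
  obtain ⟨k, hk⟩ := exists_pos_of_mem_rowStochastic hP i
  obtain ⟨k', hk'⟩ := exists_pos_of_mem_rowStochastic hP i'
  obtain ⟨j, hj, hj'⟩ := hQs k k'
  have hP₀ : ∀ i j, 0 ≤ P i j := fun _ _ => nonneg_of_mem_rowStochastic hP
  exact ⟨j, (mul_apply_pos_iff hP₀ hQ i j).2 ⟨k, hk, hj⟩,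
    (mul_apply_pos_iff hP₀ hQ i' j).2 ⟨k', hk', hj'⟩⟩

theorem IsScrambling.mul_right {P Q : Matrix ι ι ℝ} (hP : ∀ i j, 0 ≤ P i j)
    (hPs : IsScrambling P) (hQ : Q ∈ rowStochastic ℝ ι) : IsScrambling (P * Q) := by
  intro i i'
  obtain ⟨k, hk, hk'⟩ := hPs i i'
  obtain ⟨j, hj⟩ := exists_pos_of_mem_rowStochastic hQ k
  have hQ₀ : ∀ i j, 0 ≤ Q i j := fun _ _ => nonneg_of_mem_rowStochastic hQ
  exact ⟨j, (mul_apply_pos_iff hP hQ₀ i j).2 ⟨k, hk, hj⟩,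
    (mul_apply_pos_iff hP hQ₀ i' j).2 ⟨k, hk', hj⟩⟩

theorem pos_mul_pow_apply_iff {P Q : Matrix ι ι ℝ} (hP : P ∈ rowStochastic ℝ ι)
    (hQ : Q ∈ rowStochastic ℝ ι) (h : ∀ i j, 0 < (P * Q) i j ↔ 0 < P i j) (k : ℕ) (i j : ι) :
    0 < (P * Q ^ k) i j ↔ 0 < P i j := by
  induction k generalizing i j with
  | zero => simp
  | succ k ih =>
    have hnonneg : ∀ {M}, M ∈ rowStochastic ℝ ι → ∀ i j, 0 ≤ M i j :=
      fun hM _ _ => nonneg_of_mem_rowStochastic hM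
    rw [pow_succ, ← mul_assoc, mul_apply_pos_iff (hnonneg (mul_mem hP (pow_mem hQ k)))
      (hnonneg hQ), ← h, mul_apply_pos_iff (hnonneg hP) (hnonneg hQ)]
    simp only [ih]

theorem IsScrambling.of_pos_mul_apply_iff {P Q : Matrix ι ι ℝ} (hP : P ∈ rowStochastic ℝ ι)
    (hQ : Q ∈ rowStochastic ℝ ι) {k : ℕ} (hQs : IsScrambling (Q ^ k))
    (h : ∀ i j, 0 < (P * Q) i j ↔ 0 < P i j) : IsScrambling P :=
  (hQs.mul_left hP fun _ _ => nonneg_of_mem_rowStochastic (pow_mem hQ k)).of_pos_iff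
    (pos_mul_pow_apply_iff hP hQ h k)

theorem mul_apply_sub_le {P Q : Matrix ι ι ℝ} (hP : P ∈ rowStochastic ℝ ι) {a D : ℝ}
    (ha : ∀ i i', a ≤ rowOverlap P i i') (hQ : ∀ i i' j, Q i j - Q i' j ≤ D) (i i' j : ι) :
    (P * Q) i j - (P * Q) i' j ≤ (1 - a) * D := by
  obtain ⟨l, -, hl⟩ := exists_min_image univ (fun k => Q k j) ⟨i, mem_univ i⟩
  have hD : 0 ≤ D := by simpa using hQ i i j
  have hrow := sum_row_of_mem_rowStochastic hP
  -- rows of `P` have equal sums, so column `j` of `Q` may be shifted by its minimum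
  have hcenter : (P * Q) i j - (P * Q) i' j = ∑ k, (P i k - P i' k) * (Q k j - Q l j) := by
    simp only [mul_apply, sub_mul, mul_sub, sum_sub_distrib, ← sum_mul, hrow]
    ring
  have hterm : ∀ k, (P i k - P i' k) * (Q k j - Q l j) ≤ (P i k - min (P i k) (P i' k)) * D := by
    intro k
    rcases le_total (P i k) (P i' k) with h | h
    · rw [min_eq_left h, sub_self, zero_mul]
      exact mul_nonpos_of_nonpos_of_nonneg (sub_nonpos.2 h) (sub_nonneg.2 (hl k (mem_univ k)))
    · rw [min_eq_right h]
      exact mul_le_mul_of_nonneg_left (hQ k l j) (sub_nonneg.2 h)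
  calc (P * Q) i j - (P * Q) i' j ≤ ∑ k, (P i k - min (P i k) (P i' k)) * D :=
        hcenter ▸ sum_le_sum fun k _ => hterm k
    _ = (1 - rowOverlap P i i') * D := by rw [← sum_mul, sum_sub_distrib, hrow, rowOverlap]
    _ ≤ (1 - a) * D := by gcongr; exact ha i i'

end Matrix

theorem IsSIA.exists_isScrambling_pow {n : ℕ} {P : Matrix (Fin n) (Fin n) ℝ} (hSIA : IsSIA P)
    (hP : P ∈ rowStochastic ℝ (Fin n)) : ∃ k, IsScrambling (P ^ k) := by
  obtain ⟨y, hy⟩ := hSIA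
  have hentry : ∀ i j, Tendsto (fun k => (P ^ k) i j) atTop (nhds (y j)) := fun i j =>
    tendsto_pi_nhds.1 (tendsto_pi_nhds.1 hy i) j
  rcases isEmpty_or_nonempty (Fin n) with hempty | ⟨⟨i₀⟩⟩
  · exact ⟨0, fun i => isEmptyElim i⟩
  have hy₁ : ∑ j, y j = 1 :=
    tendsto_nhds_unique (tendsto_finsetSum _ fun j _ => hentry i₀ j)
      (by simp [sum_row_of_mem_rowStochastic (pow_mem hP _)])
  obtain ⟨j, -, hj⟩ := exists_lt_of_sum_lt (s := univ) (f := 0) (g := y) (by simp [hy₁])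
  have hcol : ∀ᶠ k in atTop, ∀ i, 0 < (P ^ k) i j :=
    eventually_all.2 fun i => (hentry i j).eventually (eventually_gt_nhds hj)
  obtain ⟨k, hk⟩ := hcol.exists
  exact ⟨k, fun i i' => ⟨j, hk i, hk i'⟩⟩

section Words

variable {ι α : Type*} [Fintype ι] [DecidableEq ι] {A : α → Matrix ι ι ℝ}

theorem list_map_prod_mem_rowStochastic (hA : ∀ a, A a ∈ rowStochastic ℝ ι) (w : List α) :
    (w.map A).prod ∈ rowStochastic ℝ ι :=
  Submonoid.list_prod_mem _ (by simpa using fun a _ => hA a)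

theorem exists_forall_le_length_isScrambling (hA : ∀ a, A a ∈ rowStochastic ℝ ι)
    (hpow : ∀ v : List α, v ≠ [] → ∃ k, IsScrambling ((v.map A).prod ^ k)) :
    ∃ N, ∀ w : List α, N ≤ w.length → IsScrambling (w.map A).prod := by
  classical
  refine ⟨Fintype.card (ι → ι → Prop), fun w hw => ?_⟩
  obtain ⟨a, b, hab, hpattern⟩ := Fintype.exists_ne_map_eq_of_card_lt
    (fun (l : Fin (Fintype.card (ι → ι → Prop) + 1)) i j => 0 < ((w.take l).map A).prod i j)
    (by simp)
  wlog hlt : a < b generalizing a b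
  · exact this b a hab.symm hpattern.symm (lt_of_le_of_ne (not_lt.1 hlt) hab.symm)
  set v := (w.drop a).take (b - a)
  have hv : v ≠ [] := by
    rw [← List.length_pos_iff]
    simp only [v, List.length_take, List.length_drop]
    omega
  have hsplit : w.take b = w.take a ++ v := by
    rw [← List.take_add, Nat.add_sub_cancel' hlt.le]
  obtain ⟨k, hk⟩ := hpow v hv
  have hprefix : IsScrambling ((w.take a).map A).prod := by
    refine hk.of_pos_mul_apply_iff (list_map_prod_mem_rowStochastic hA _)
      (list_map_prod_mem_rowStochastic hA v) fun i j => ?_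
    rw [← List.prod_append, ← List.map_append, ← hsplit]
    exact (congrFun₂ hpattern i j).to_iff.symm
  rw [← List.take_append_drop a w, List.map_append, List.prod_append]
  exact hprefix.mul_right (fun _ _ => nonneg_of_mem_rowStochastic
    (list_map_prod_mem_rowStochastic hA _)) (list_map_prod_mem_rowStochastic hA _)

theorem exists_pos_forall_le_rowOverlap [Finite α] (hA : ∀ a, A a ∈ rowStochastic ℝ ι) {N : ℕ}
    (hN : ∀ w : List α, w.length = N → IsScrambling (w.map A).prod) :
    ∃ a > 0, ∀ w : List α, w.length = N → ∀ i i', a ≤ rowOverlap (w.map A).prod i i' := by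
  obtain ⟨a, ha, hle⟩ := ((List.finite_length_eq α N).prod (Set.finite_univ (α := ι × ι))
    ).exists_pos_forall_le (f := fun x => rowOverlap (x.1.map A).prod x.2.1 x.2.2)
    fun x hx => (hN x.1 hx.1).rowOverlap_pos
      (fun _ _ => nonneg_of_mem_rowStochastic (list_map_prod_mem_rowStochastic hA _)) _ _
  exact ⟨a, ha, fun w hw i i' => hle (w, i, i') ⟨hw, trivial⟩⟩

theorem list_map_prod_apply_sub_le (hA : ∀ a, A a ∈ rowStochastic ℝ ι) {N : ℕ} {a : ℝ}
    (ha : ∀ w : List α, w.length = N → ∀ i i', a ≤ rowOverlap (w.map A).prod i i') (r : ℕ)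
    (w : List α) (hw : r * N ≤ w.length) (i i' j : ι) :
    (w.map A).prod i j - (w.map A).prod i' j ≤ (1 - a) ^ r := by
  induction r generalizing w i i' j with
  | zero =>
    have hP := list_map_prod_mem_rowStochastic hA w
    linarith [le_one_of_mem_rowStochastic hP (i := i) (j := j),
      nonneg_of_mem_rowStochastic hP (i := i') (j := j)]
  | succ r ih =>
    have hw' : r * N + N ≤ w.length := by rwa [Nat.succ_mul] at hw
    rw [← List.take_append_drop N w, List.map_append, List.prod_append, pow_succ']
    exact mul_apply_sub_le (list_map_prod_mem_rowStochastic hA _)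
      (ha _ (by simp only [List.length_take]; omega))
      (fun i i' j => ih _ (by simp only [List.length_drop]; omega) i i' j) i i' j

end Words

/-- Wolfowitz's theorem: let `A_1, …, A_m` be row-stochastic `n×n` matrices such that
every finite product `A_{i_k} ⋯ A_{i_1}` is SIA.  Then for every `ε > 0` there is `N`
such that every product of length `≥ N` of matrices from the set is within `ε`,
entrywise, of some rank-one row-stochastic matrix `1·cᵀ` (with `c` depending on the
product). -/
theorem wolfowitz_products_of_SIA_matrices
    {n m : ℕ} (hn : 0 < n) (A : Fin m → Matrix (Fin n) (Fin n) ℝ)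
    (hnonneg : ∀ l i j, 0 ≤ A l i j) (hrow : ∀ l i, ∑ j, A l i j = 1)
    (hSIA : ∀ w : List (Fin m), w ≠ [] → IsSIA ((w.map A).prod)) :
    ∀ ε : ℝ, 0 < ε → ∃ N : ℕ, ∀ w : List (Fin m), N ≤ w.length →
      ∃ c : Fin n → ℝ, (∀ j, 0 ≤ c j) ∧ (∑ j, c j) = 1 ∧
        ∀ i j : Fin n, |(w.map A).prod i j - c j| ≤ ε := by
  intro ε hε
  have hA : ∀ l, A l ∈ rowStochastic ℝ (Fin n) :=
    fun l => mem_rowStochastic_iff_sum.2 ⟨hnonneg l, hrow l⟩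
  obtain ⟨N, hN⟩ := exists_forall_le_length_isScrambling hA fun v hv =>
    (hSIA v hv).exists_isScrambling_pow (list_map_prod_mem_rowStochastic hA v)
  obtain ⟨a, ha, hoverlap⟩ := exists_pos_forall_le_rowOverlap hA fun w hw => hN w hw.ge
  obtain ⟨r, hr⟩ := exists_pow_lt_of_lt_one hε (sub_lt_self 1 ha)
  refine ⟨r * N, fun w hw => ?_⟩
  have hP := list_map_prod_mem_rowStochastic hA w
  refine ⟨(w.map A).prod ⟨0, hn⟩, fun j => nonneg_of_mem_rowStochastic hP,
    sum_row_of_mem_rowStochastic hP _, fun i j => abs_sub_le_iff.2 ⟨?_, ?_⟩⟩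
  · exact (list_map_prod_apply_sub_le hA hoverlap r w hw i _ j).trans hr.le
  · exact (list_map_prod_apply_sub_le hA hoverlap r w hw _ i j).trans hr.le
end

section
/- Let λ > 0 and τ > 0. Then every complex root s of the characteristic quasi-polynomial s + λ·e^{-τs} = 0 satisfies Re(s) < 0 if and only if λτ < π/2. -/
/-!
Substituting `z = τ s` turns the equation into `z + a e^{-z} = 0` with `a = λτ`. A root with
`Re z ≥ 0` has `|z| = a e^{-Re z} ≤ a`, so for `a < π/2` also `|Im z| < π/2` and then
`Re z = -a e^{-Re z} cos (Im z) < 0`, a contradiction. Conversely, writing the root with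
`Im z = θ ∈ [π/2, π)` explicitly, its real part `-θ cot θ` is nonnegative and the
corresponding `a` runs continuously from `π/2` to `∞`, so every `a ≥ π/2` is reached.
-/

open Real Set

theorem add_mul_exp_neg_eq_zero_iff (a z : ℂ) :
    z + a * Complex.exp (-z) = 0 ↔ z * Complex.exp z = -a := by
  rw [← mul_right_inj' (Complex.exp_ne_zero z), mul_zero, mul_add, mul_left_comm,
    ← Complex.exp_add, add_neg_cancel, Complex.exp_zero, mul_one, mul_comm,
    add_eq_zero_iff_eq_neg]

theorem add_mul_exp_neg_mul_eq_zero_iff {τ : ℂ} (hτ : τ ≠ 0) (c s : ℂ) :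
    s + c * Complex.exp (-τ * s) = 0 ↔ τ * s + c * τ * Complex.exp (-(τ * s)) = 0 := by
  rw [← mul_right_inj' hτ, mul_zero, neg_mul]
  ring_nf

theorem re_neg_of_add_mul_exp_neg_eq_zero {a : ℝ} (ha₀ : 0 < a) (ha : a < π / 2) {z : ℂ}
    (hz : z + a * Complex.exp (-z) = 0) : z.re < 0 := by
  by_contra! hre
  have hz' : z = -(a * Complex.exp (-z)) := eq_neg_of_add_eq_zero_left hz
  have hexp : Real.exp (-z.re) ≤ 1 := exp_le_one_iff.mpr (neg_nonpos.mpr hre)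
  have hnorm : ‖z‖ ≤ a := calc
    ‖z‖ = a * Real.exp (-z.re) := by
      conv_lhs => rw [hz']
      rw [norm_neg, norm_mul, Complex.norm_exp, Complex.neg_re, Complex.norm_real,
        norm_of_nonneg ha₀.le]
    _ ≤ a := mul_le_of_le_one_right ha₀.le hexp
  have him : |z.im| < π / 2 := (z.abs_im_le_norm.trans hnorm).trans_lt ha
  have hcos : 0 < Real.cos z.im := cos_pos_of_mem_Ioo (abs_lt.mp him)
  have hre' : z.re = -(a * (Real.exp (-z.re) * Real.cos z.im)) := by
    conv_lhs => rw [hz']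
    simp [Complex.exp_re]
  have : 0 < a * (Real.exp (-z.re) * Real.cos z.im) := by positivity
  linarith

/-- For `0 < θ < π`, `z = delayRoot θ` is the root of `z * exp z = -a` with `Im z = θ`,
where `a = delayGain θ`. -/
noncomputable def delayRoot (θ : ℝ) : ℂ := ⟨-θ * cos θ / sin θ, θ⟩

noncomputable def delayGain (θ : ℝ) : ℝ := θ / sin θ * Real.exp (delayRoot θ).re

theorem delayRoot_mul_exp {θ : ℝ} (hθ : sin θ ≠ 0) :
    delayRoot θ * Complex.exp (delayRoot θ) = -(delayGain θ : ℂ) := by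
  apply Complex.ext <;>
    simp only [delayRoot, delayGain, Complex.mul_re, Complex.mul_im, Complex.exp_re,
      Complex.exp_im, Complex.neg_re, Complex.neg_im, Complex.ofReal_re, Complex.ofReal_im]
  · field_simp
    linear_combination -θ * sin_sq_add_cos_sq θ
  · field_simp
    ring

theorem delayGain_pi_div_two : delayGain (π / 2) = π / 2 := by
  simp [delayGain, delayRoot]

theorem delayRoot_re_nonneg {θ : ℝ} (h₁ : π / 2 ≤ θ) (h₂ : θ < π) : 0 ≤ (delayRoot θ).re := by
  have hsin : 0 < sin θ := sin_pos_of_pos_of_lt_pi (by linarith [pi_pos]) h₂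
  have hcos : cos θ ≤ 0 := cos_nonpos_of_pi_div_two_le_of_le h₁ (by linarith)
  exact div_nonneg (by nlinarith [pi_pos]) hsin.le

theorem div_sin_le_delayGain {θ : ℝ} (h₁ : π / 2 ≤ θ) (h₂ : θ < π) :
    θ / sin θ ≤ delayGain θ :=
  le_mul_of_one_le_right
    (div_nonneg (by linarith [pi_pos]) (sin_pos_of_pos_of_lt_pi (by linarith [pi_pos]) h₂).le)
    (one_le_exp (delayRoot_re_nonneg h₁ h₂))

theorem exists_delayGain_eq {a : ℝ} (ha : π / 2 ≤ a) :
    ∃ θ ∈ Ico (π / 2) π, delayGain θ = a := by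
  have ha₀ : 0 < a := by linarith [pi_pos]
  have hpos : 0 < π / (2 * a) := by positivity
  have hle : π / (2 * a) ≤ 1 := by rw [div_le_one (by positivity)]; linarith
  set θ₁ := π - arcsin (π / (2 * a))
  have hθ₁ : θ₁ ∈ Ico (π / 2) π :=
    ⟨by linarith [arcsin_le_pi_div_two (π / (2 * a))], by linarith [arcsin_pos.mpr hpos]⟩
  have hsin : ∀ θ ∈ Icc (π / 2) θ₁, sin θ ≠ 0 := fun θ hθ =>
    (sin_pos_of_pos_of_lt_pi (by linarith [hθ.1, pi_pos]) (hθ.2.trans_lt hθ₁.2)).ne'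
  have hcont : ContinuousOn delayGain (Icc (π / 2) θ₁) := by
    unfold delayGain
    exact ContinuousOn.mul (continuousOn_id.div continuousOn_sin hsin)
      (ContinuousOn.rexp ((continuousOn_id.neg.mul continuousOn_cos).div continuousOn_sin hsin))
  have hθ₁a : a ≤ delayGain θ₁ := calc
    a ≤ θ₁ / (π / (2 * a)) := by
      rw [div_div_eq_mul_div, le_div_iff₀ pi_pos]; nlinarith [hθ₁.1]
    _ = θ₁ / sin θ₁ := by rw [sin_pi_sub, sin_arcsin (by linarith) hle]
    _ ≤ delayGain θ₁ := div_sin_le_delayGain hθ₁.1 hθ₁.2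
  obtain ⟨θ, hθ, rfl⟩ := intermediate_value_Icc hθ₁.1 hcont
    ⟨delayGain_pi_div_two.le.trans ha, hθ₁a⟩
  exact ⟨θ, ⟨hθ.1, hθ.2.trans_lt hθ₁.2⟩, rfl⟩

theorem exists_add_mul_exp_neg_eq_zero_re_nonneg {a : ℝ} (ha : π / 2 ≤ a) :
    ∃ z : ℂ, z + a * Complex.exp (-z) = 0 ∧ 0 ≤ z.re := by
  obtain ⟨θ, ⟨h₁, h₂⟩, rfl⟩ := exists_delayGain_eq ha
  refine ⟨delayRoot θ, ?_, delayRoot_re_nonneg h₁ h₂⟩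
  rw [add_mul_exp_neg_eq_zero_iff, delayRoot_mul_exp]
  exact (sin_pos_of_pos_of_lt_pi (by linarith [pi_pos]) h₂).ne'

/-- Stability criterion for the scalar delay equation `ẏ(t) = -λ y(t-τ)`: for
`λ > 0` and `τ > 0`, every complex root `s` of the characteristic quasi-polynomial
`s + λ e^{-τ s} = 0` satisfies `Re s < 0` if and only if `λτ < π/2`. -/
theorem delay_stability_iff_lambda_tau_lt_pi_div_two
    (lam tau : ℝ) (hlam : 0 < lam) (htau : 0 < tau) :
    (∀ s : ℂ, s + (lam : ℂ) * Complex.exp (-(tau : ℂ) * s) = 0 → s.re < 0) ↔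
      lam * tau < Real.pi / 2 := by
  have hτ : (tau : ℂ) ≠ 0 := Complex.ofReal_ne_zero.mpr htau.ne'
  have hscale : ∀ s : ℂ, s + (lam : ℂ) * Complex.exp (-(tau : ℂ) * s) = 0 ↔
      tau * s + ((lam * tau : ℝ) : ℂ) * Complex.exp (-(tau * s)) = 0 := fun s => by
    rw [add_mul_exp_neg_mul_eq_zero_iff hτ]; push_cast; rfl
  constructor
  · intro hstable
    by_contra! hge
    obtain ⟨z, hz, hre⟩ := exists_add_mul_exp_neg_eq_zero_re_nonneg hge
    have hs := hstable (z / tau) ((hscale _).mpr (by rwa [mul_div_cancel₀ z hτ]))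
    rw [Complex.div_ofReal_re] at hs
    exact (div_nonneg hre htau.le).not_gt hs
  · intro hlt s hs
    have hre := re_neg_of_add_mul_exp_neg_eq_zero (mul_pos hlam htau) hlt ((hscale s).mp hs)
    rw [Complex.re_ofReal_mul] at hre
    exact neg_of_mul_neg_right hre htau.le
end
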